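/- arXiv:1802.04688 — 3 statements merged into one kernel-verified Lean document; each statement's English description precedes it below -/
import Mathlib

section
/- Given any group extension 1 → G → E → H → 1, there exists an injective group homomorphism E → G ≀≀ H into the unrestricted wreath product such that composing with the canonical projection G ≀≀ H → H recovers the quotient map E → H (Kaloujnine–Krasner embedding). -/
/-- The unrestricted wreath product `G ≀≀ H = (∏_{h∈H} G) ⋊ H`. -/
def Wr (G H : Type*) [Group G] [Group H] := (H → G) × H

namespace Wr

variable {G H : Type*} [Group G] [Group H]

/-- First (non-homomorphic) projection `G ≀≀ H → ∏_{h∈H} G`. -/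
def fst (a : Wr G H) : H → G := a.1

/-- Second projection `G ≀≀ H → H`. -/
def snd (a : Wr G H) : H := a.2

instance instGroup : Group (Wr G H) where
  mul a b := (fun x => a.1 (b.2 * x) * b.1 x, a.2 * b.2)
  one := (1, 1)
  inv a := (fun x => (a.1 (a.2⁻¹ * x))⁻¹, a.2⁻¹)
  mul_assoc a b c := by
    refine Prod.ext ?_ ?_
    · funext x
      show a.1 (b.2 * (c.2 * x)) * b.1 (c.2 * x) * c.1 x
          = a.1 (b.2 * c.2 * x) * (b.1 (c.2 * x) * c.1 x)
      rw [mul_assoc, mul_assoc]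
    · exact mul_assoc a.2 b.2 c.2
  one_mul a := by
    refine Prod.ext ?_ ?_
    · funext x
      show (1 : H → G) (a.2 * x) * a.1 x = a.1 x
      simp
    · exact one_mul a.2
  mul_one a := by
    refine Prod.ext ?_ ?_
    · funext x
      show a.1 ((1 : H) * x) * (1 : H → G) x = a.1 x
      simp
    · exact mul_one a.2
  inv_mul_cancel a := by
    refine Prod.ext ?_ ?_
    · funext x
      show (a.1 (a.2⁻¹ * (a.2 * x)))⁻¹ * a.1 x = (1 : H → G) x
      simp [← mul_assoc]
    · exact inv_mul_cancel a.2

@[simp] theorem mul_def (a b : Wr G H) :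
    a * b = (fun x => a.1 (b.2 * x) * b.1 x, a.2 * b.2) := rfl

end Wr

/-!
Choose a set-theoretic section `s : H → E` of `q`. Each `e : E` permutes the cosets
`s x · N` (with `N = ker q`) by left multiplication, sending `s x · N` to `s (q e * x) · N`,
and the correction `(s (q e * x))⁻¹ * e * s x ∈ N` is a crossed-homomorphism-like cocycle
in `x`. Recording the permutation `q e` together with these corrections is a homomorphism
`E → N ≀≀ H`, injective because the correction at `x = 1` recovers `e` up to conjugation
by `s 1` once `q e = 1`. Transporting `N` to `G` along `ι` gives the embedding.
-/

namespace Wr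

variable {G G' H E : Type*} [Group G] [Group G'] [Group H] [Group E]

theorem ext {a b : Wr G H} (h₁ : a.fst = b.fst) (h₂ : a.snd = b.snd) : a = b :=
  Prod.ext h₁ h₂

def map (φ : G →* G') : Wr G H →* Wr G' H where
  toFun a := (fun x => φ (a.1 x), a.2)
  map_one' := ext (funext fun _ => map_one φ) rfl
  map_mul' a b := ext (funext fun x => map_mul φ (a.1 (b.2 * x)) (b.1 x)) rfl

theorem map_injective {φ : G →* G'} (hφ : Function.Injective φ) :
    Function.Injective (map φ : Wr G H →* Wr G' H) := fun _ _ h =>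
  ext (funext fun x => hφ (congrFun (congrArg fst h) x)) (congrArg snd h :)

def lift (q : E →* H) (f : E → H → G)
    (hf : ∀ a b x, f (a * b) x = f a (q b * x) * f b x) : E →* Wr G H where
  toFun e := (f e, q e)
  map_one' := by
    refine ext (funext fun x => ?_) (map_one q)
    have h := hf 1 1 x
    rw [map_one, one_mul, one_mul] at h
    exact left_eq_mul.mp h
  map_mul' a b := ext (funext (hf a b)) (map_mul q a b)

end Wr

namespace MonoidHom

variable {H E : Type*} [Group H] [Group E] (q : E →* H) {s : H → E}

def kerCocycle (hs : Function.RightInverse s q) (e : E) (x : H) : q.ker :=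
  ⟨(s (q e * x))⁻¹ * e * s x, by simp [mem_ker, hs _]⟩

theorem kerCocycle_mul (hs : Function.RightInverse s q) (a b : E) (x : H) :
    q.kerCocycle hs (a * b) x = q.kerCocycle hs a (q b * x) * q.kerCocycle hs b x := by
  ext
  simp [kerCocycle, mul_assoc]

/-- The Kaloujnine–Krasner embedding. -/
def toWrKer (hs : Function.RightInverse s q) : E →* Wr q.ker H :=
  Wr.lift q (q.kerCocycle hs) (q.kerCocycle_mul hs)

theorem toWrKer_injective (hs : Function.RightInverse s q) :
    Function.Injective (q.toWrKer hs) := by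
  refine (injective_iff_map_eq_one _).mpr fun e he => ?_
  have hqe : q e = 1 := congrArg Wr.snd he
  have hconj : (s (q e * 1))⁻¹ * e * s 1 = 1 := congrArg (fun a => (a.fst 1 : E)) he
  rw [hqe, one_mul] at hconj
  exact (conj_eq_one_iff (a := (s 1)⁻¹)).mp (by rwa [inv_inv])

end MonoidHom

/-- Kaloujnine–Krasner: for any extension `1 → G → E → H → 1` there is an
injective homomorphism `E → G ≀≀ H` lifting the quotient map `E → H`. -/
theorem kaloujnine_krasner {G H E : Type*} [Group G] [Group H] [Group E]
    (ι : G →* E) (q : E →* H)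
    (hι : Function.Injective ι) (hq : Function.Surjective q)
    (hexact : ι.range = q.ker) :
    ∃ Ψ : E →* Wr G H, Function.Injective Ψ ∧ ∀ e : E, Wr.snd (Ψ e) = q e := by
  obtain ⟨s, hs⟩ := hq.hasRightInverse
  let kerEquiv : q.ker ≃* G :=
    ((MonoidHom.ofInjective hι).trans (MulEquiv.subgroupCongr hexact)).symm
  refine ⟨(Wr.map kerEquiv.toMonoidHom).comp (q.toWrKer hs), ?_, fun _ => rfl⟩
  exact (Wr.map_injective kerEquiv.injective).comp (q.toWrKer_injective hs)
end

section
/- Every amenable group is sofic; moreover the sofic approximations can be taken of the following special form: given a finite K ⊆ G and ε > 0, there exist a finite symmetric Følner set F ⊆ G, a subset E ⊆ F with |E| ≥ (1−ε)|F|, and a map φ: G → Sym(F) such that φ(k₁)φ(k₂)f = k₁k₂f = φ(k₁k₂)f for all k₁,k₂ ∈ K and f ∈ E, and φ(k)f = kf for all k ∈ K and f ∈ E. -/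
/-- Normalized Hamming distance on the symmetric group of a finite set. -/
noncomputable def hamDist {F : Type*} [Fintype F] (α β : Equiv.Perm F) : ℝ :=
  (Nat.card {f : F // α f ≠ β f} : ℝ) / (Fintype.card F : ℝ)

/-- A group is sofic if every finite subset admits `(K,ε)`-approximations into
finite symmetric groups with the normalized Hamming distance. -/
def IsSofic (G : Type*) [Group G] : Prop :=
  ∀ (K : Finset G) (ε : ℝ), 0 < ε →
    ∃ (F : Type) (_ : Fintype F) (_ : Nonempty F) (φ : G → Equiv.Perm F),
      (∀ k₁ ∈ K, ∀ k₂ ∈ K, hamDist (φ (k₁ * k₂)) (φ k₁ * φ k₂) ≤ ε) ∧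
      (∀ k₁ ∈ K, ∀ k₂ ∈ K, k₁ ≠ k₂ → 1 - ε ≤ hamDist (φ k₁) (φ k₂))

/-- Amenability via Følner sets: for every finite `S ⊆ G` and `ε > 0` there is a
nonempty finite `F ⊆ G` with `|F \ sF| < ε|F|` for all `s ∈ S`. -/
def IsAmenableFolner (G : Type*) [Group G] [DecidableEq G] : Prop :=
  ∀ (S : Finset G) (ε : ℝ), 0 < ε →
    ∃ F : Finset G, F.Nonempty ∧
      ∀ s ∈ S, ((F \ F.image (s * ·)).card : ℝ) < ε * F.card

/-!
For a Følner set `F`, the function `x ↦ #(F ∩ x⁻¹F)` is invariant under `x ↦ x⁻¹`, so its level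
sets are symmetric. Summed over all levels, the sizes of these level sets add up to `#F ^ 2`, while
their boundaries with respect to `s` add up to at most `#F` times the boundary of `F`; hence some
level set is a symmetric Følner set.

Given a symmetric Følner set `F` for `K ∪ K²` and the inverses of its elements, the points `f` with
`t f ∈ F` for all `t ∈ K ∪ K²` fill all but an `ε`-fraction of `F`. Left multiplication by `k`,
extended arbitrarily to a permutation of `F`, is exactly multiplicative on these points and
separates distinct elements of `K` there, which gives the sofic approximations.
-/

open Finset
open scoped Pointwise

section LayerCake

variable {α : Type*}

lemma sum_card_filter_lt_and_le (X : Finset α) (f g : α → ℕ) {N : ℕ}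
    (hf : ∀ x ∈ X, f x ≤ N) :
    ∑ t ∈ Icc 1 N, #{x ∈ X | g x < t ∧ t ≤ f x} = ∑ x ∈ X, (f x - g x) := by
  simp_rw [card_filter]
  rw [sum_comm]
  refine sum_congr rfl fun x hx => ?_
  rw [← card_filter]
  have hlevels : {t ∈ Icc 1 N | g x < t ∧ t ≤ f x} = Icc (g x + 1) (f x) := by
    ext t
    simp only [mem_filter, mem_Icc]
    have := hf x hx
    omega
  rw [hlevels, Nat.card_Icc]
  omega

end LayerCake

section Overlap

variable {G : Type*} [Group G] [DecidableEq G]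

def overlap (F : Finset G) (x : G) : ℕ := #{b ∈ F | x * b ∈ F}

lemma overlap_le_card (F : Finset G) (x : G) : overlap F x ≤ #F := card_filter_le _ _

lemma overlap_inv (F : Finset G) (x : G) : overlap F x⁻¹ = overlap F x :=
  card_nbij' (x⁻¹ * ·) (x * ·) (by intro b; simp +contextual) (by intro b; simp +contextual)
    (fun _ _ => by simp) (fun _ _ => by simp)

lemma mem_mul_inv_of_overlap_pos {F : Finset G} {x : G} (h : 0 < overlap F x) :
    x ∈ F * F⁻¹ := by
  obtain ⟨b, hb⟩ := card_pos.mp h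
  rw [mem_filter] at hb
  exact mem_mul.mpr ⟨x * b, hb.2, b⁻¹, inv_mem_inv hb.1, by group⟩

lemma sum_overlap (F : Finset G) : ∑ x ∈ F * F⁻¹, overlap F x = #F * #F := by
  unfold overlap
  simp_rw [card_filter]
  rw [sum_comm]
  refine sum_const_nat fun b hb => ?_
  rw [← card_filter]
  exact card_nbij' (· * b) (· * b⁻¹) (by intro x; simp +contextual)
    (fun a ha => by simpa [mem_mul] using ⟨⟨a, ha, b⁻¹, by simpa, rfl⟩, ha⟩)
    (fun _ _ => by simp) (fun _ _ => by simp)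

lemma overlap_tsub_le (F : Finset G) (s x : G) :
    overlap F x - overlap F (s⁻¹ * x) ≤ #{b ∈ F | x * b ∈ F \ F.image (s * ·)} := by
  have hsplit : {b ∈ F | x * b ∈ F} ⊆
      {b ∈ F | s⁻¹ * x * b ∈ F} ∪ {b ∈ F | x * b ∈ F \ F.image (s * ·)} := by
    intro b
    simp only [mem_filter, mem_union, mem_sdiff, image_mul_left, mem_preimage, mul_assoc]
    tauto
  have := (card_le_card hsplit).trans (card_union_le _ _)
  unfold overlap
  omega

lemma sum_card_filter_mul_mem_le (X F A : Finset G) :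
    ∑ x ∈ X, #{b ∈ F | x * b ∈ A} ≤ #A * #F := by
  simp_rw [card_filter]
  rw [sum_comm, mul_comm, ← smul_eq_mul]
  refine sum_le_card_nsmul _ _ _ fun b _ => ?_
  rw [← card_filter]
  exact card_le_card_of_injOn (· * b) (fun x hx => (mem_filter.mp hx).2)
    (fun _ _ _ _ => mul_right_cancel)

def overlapLevel (F : Finset G) (t : ℕ) : Finset G := {x ∈ F * F⁻¹ | t ≤ overlap F x}

lemma inv_mem_overlapLevel {F : Finset G} {t : ℕ} {x : G} (ht : 1 ≤ t)
    (hx : x ∈ overlapLevel F t) : x⁻¹ ∈ overlapLevel F t := by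
  have hle : t ≤ overlap F x⁻¹ := (overlap_inv F x).symm ▸ (mem_filter.mp hx).2
  exact mem_filter.mpr ⟨mem_mul_inv_of_overlap_pos (by omega), hle⟩

lemma sum_card_overlapLevel (F : Finset G) :
    ∑ t ∈ Icc 1 #F, #(overlapLevel F t) = #F * #F := by
  have hlayers := sum_card_filter_lt_and_le (F * F⁻¹) (overlap F) (fun _ => 0)
    fun x _ => overlap_le_card F x
  simp only [tsub_zero, sum_overlap] at hlayers
  rw [← hlayers]
  refine sum_congr rfl fun t ht => ?_
  have : 0 < t := (mem_Icc.mp ht).1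
  simp only [overlapLevel, this, true_and]

lemma sdiff_image_overlapLevel_subset (F : Finset G) (s : G) {t : ℕ} (ht : 1 ≤ t) :
    overlapLevel F t \ (overlapLevel F t).image (s * ·) ⊆
      {x ∈ F * F⁻¹ | overlap F (s⁻¹ * x) < t ∧ t ≤ overlap F x} := by
  intro x
  simp only [overlapLevel, mem_sdiff, mem_filter, image_mul_left, mem_preimage]
  rintro ⟨⟨hx, hxt⟩, hsx⟩
  refine ⟨hx, not_le.mp fun hle => hsx ⟨mem_mul_inv_of_overlap_pos (by omega), hle⟩, hxt⟩

lemma sum_card_sdiff_image_overlapLevel_le (F : Finset G) (s : G) :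
    ∑ t ∈ Icc 1 #F, #(overlapLevel F t \ (overlapLevel F t).image (s * ·)) ≤
      #(F \ F.image (s * ·)) * #F :=
  calc ∑ t ∈ Icc 1 #F, #(overlapLevel F t \ (overlapLevel F t).image (s * ·))
      ≤ ∑ t ∈ Icc 1 #F, #{x ∈ F * F⁻¹ | overlap F (s⁻¹ * x) < t ∧ t ≤ overlap F x} :=
        sum_le_sum fun _ ht =>
          card_le_card (sdiff_image_overlapLevel_subset F s (mem_Icc.mp ht).1)
    _ = ∑ x ∈ F * F⁻¹, (overlap F x - overlap F (s⁻¹ * x)) :=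
        sum_card_filter_lt_and_le _ _ _ fun x _ => overlap_le_card F x
    _ ≤ ∑ x ∈ F * F⁻¹, #{b ∈ F | x * b ∈ F \ F.image (s * ·)} :=
        sum_le_sum fun x _ => overlap_tsub_le F s x
    _ ≤ #(F \ F.image (s * ·)) * #F := sum_card_filter_mul_mem_le _ _ _

end Overlap

section Hamming

variable {α : Type*} [Fintype α]

lemma hamDist_permCongr {β : Type*} [Fintype β] (e : α ≃ β) (σ τ : Equiv.Perm α) :
    hamDist (e.permCongr σ) (e.permCongr τ) = hamDist σ τ := by
  rw [hamDist, hamDist, Fintype.card_congr e]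
  congr 2
  exact Nat.card_congr (e.subtypeEquiv fun a => by simp [Equiv.permCongr_apply]).symm

variable [Nonempty α] {σ τ : Equiv.Perm α} {A : Finset α} {ε : ℝ}

lemma hamDist_le_of_eqOn (hA : (1 - ε) * Fintype.card α ≤ #A) (h : ∀ a ∈ A, σ a = τ a) :
    hamDist σ τ ≤ ε := by
  classical
  have hcard : (0 : ℝ) < Fintype.card α := by exact_mod_cast Fintype.card_pos
  have hdis : Nat.card {a // σ a ≠ τ a} ≤ #Aᶜ := by
    rw [Nat.card_eq_fintype_card, Fintype.card_subtype]
    exact card_le_card fun a ha => mem_compl.mpr fun haA => (mem_filter.mp ha).2 (h a haA)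
  have hcompl : (#Aᶜ : ℝ) = Fintype.card α - #A := by
    rw [card_compl, Nat.cast_sub (card_le_univ A)]
  have : (Nat.card {a // σ a ≠ τ a} : ℝ) ≤ #Aᶜ := by exact_mod_cast hdis
  rw [hamDist, div_le_iff₀ hcard]
  linarith

lemma le_hamDist_of_ne (hA : (1 - ε) * Fintype.card α ≤ #A) (h : ∀ a ∈ A, σ a ≠ τ a) :
    1 - ε ≤ hamDist σ τ := by
  classical
  have hcard : (0 : ℝ) < Fintype.card α := by exact_mod_cast Fintype.card_pos
  have hagr : #A ≤ Nat.card {a // σ a ≠ τ a} := by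
    rw [Nat.card_eq_fintype_card, Fintype.card_subtype]
    exact card_le_card fun a ha => mem_filter.mpr ⟨mem_univ a, h a ha⟩
  rw [hamDist, le_div_iff₀ hcard]
  exact hA.trans (by exact_mod_cast hagr)

end Hamming

lemma isSofic_of_exists_perm {G : Type*} [Group G]
    (h : ∀ (K : Finset G) (ε : ℝ), 0 < ε →
      ∃ (α : Type*) (_ : Fintype α) (_ : Nonempty α) (φ : G → Equiv.Perm α),
        (∀ k₁ ∈ K, ∀ k₂ ∈ K, hamDist (φ (k₁ * k₂)) (φ k₁ * φ k₂) ≤ ε) ∧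
        (∀ k₁ ∈ K, ∀ k₂ ∈ K, k₁ ≠ k₂ → 1 - ε ≤ hamDist (φ k₁) (φ k₂))) :
    IsSofic G := by
  intro K ε hε
  obtain ⟨α, _, _, φ, hmul, hsep⟩ := h K ε hε
  let e := Fintype.equivFin α
  refine ⟨Fin (Fintype.card α), inferInstance, ⟨e (Classical.arbitrary α)⟩,
    fun g => e.permCongr (φ g), fun k₁ hk₁ k₂ hk₂ => ?_, fun k₁ hk₁ k₂ hk₂ hne => ?_⟩
  · rw [← Equiv.permCongr_mul, hamDist_permCongr]
    exact hmul k₁ hk₁ k₂ hk₂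
  · rw [hamDist_permCongr]
    exact hsep k₁ hk₁ k₂ hk₂ hne

section SpecialForm

variable {G : Type*} [Group G] [DecidableEq G]

lemma exists_symmetric_folner (hG : IsAmenableFolner G) (S : Finset G) {ε : ℝ} (hε : 0 < ε) :
    ∃ F : Finset G, F.Nonempty ∧ (∀ f ∈ F, f⁻¹ ∈ F) ∧
      ∀ s ∈ S, (#(F \ F.image (s * ·)) : ℝ) < ε * #F := by
  set δ := ε / (#S + 1) with hδ_def
  have hδ : 0 < δ := by positivity
  have hSδ : #S * δ < ε := by
    rw [hδ_def, ← mul_div_assoc, div_lt_iff₀ (by positivity)]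
    nlinarith
  obtain ⟨F, hFne, hF⟩ := hG S δ hδ
  let L := overlapLevel F
  have hsum : ∑ t ∈ Icc 1 #F, ∑ s ∈ S, (#(L t \ (L t).image (s * ·)) : ℝ) <
      ∑ t ∈ Icc 1 #F, ε * #(L t) :=
    calc ∑ t ∈ Icc 1 #F, ∑ s ∈ S, (#(L t \ (L t).image (s * ·)) : ℝ)
        = ∑ s ∈ S, ∑ t ∈ Icc 1 #F, (#(L t \ (L t).image (s * ·)) : ℝ) := sum_comm
      _ ≤ ∑ s ∈ S, (#(F \ F.image (s * ·)) : ℝ) * #F :=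
          sum_le_sum fun s _ => by exact_mod_cast sum_card_sdiff_image_overlapLevel_le F s
      _ ≤ ∑ _s ∈ S, δ * #F * #F := sum_le_sum fun s hs => by gcongr; exact (hF s hs).le
      _ = #S * δ * (#F * #F) := by rw [sum_const, nsmul_eq_mul]; ring
      _ < ε * (#F * #F) := by gcongr
      _ = ∑ t ∈ Icc 1 #F, ε * #(L t) := by
          rw [← mul_sum, ← Nat.cast_sum, sum_card_overlapLevel, Nat.cast_mul]
  obtain ⟨t, ht, hlt⟩ := exists_lt_of_sum_lt hsum
  have hbdry : 0 ≤ ∑ s ∈ S, (#(L t \ (L t).image (s * ·)) : ℝ) :=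
    sum_nonneg fun _ _ => Nat.cast_nonneg _
  have hLt : (0 : ℝ) < #(L t) := pos_of_mul_pos_right (hbdry.trans_lt hlt) hε.le
  refine ⟨L t, card_pos.mp (by exact_mod_cast hLt),
    fun x hx => inv_mem_overlapLevel (mem_Icc.mp ht).1 hx, fun s hs => ?_⟩
  exact (single_le_sum (f := fun s => (#(L t \ (L t).image (s * ·)) : ℝ))
    (fun _ _ => Nat.cast_nonneg _) hs).trans_lt hlt

noncomputable def mulPerm (F : Finset G) (k : G) : Equiv.Perm F :=
  Equiv.extendSubtype (p := fun x : F => k * x ∈ F) (q := fun y : F => k⁻¹ * y ∈ F)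
    { toFun := fun x => ⟨⟨k * x, x.2⟩, by simp [x.1.2]⟩
      invFun := fun y => ⟨⟨k⁻¹ * y, y.2⟩, by simp [y.1.2]⟩
      left_inv := fun x => by ext; simp
      right_inv := fun y => by ext; simp }

lemma mulPerm_apply {F : Finset G} {k : G} {x : F} (h : k * x ∈ F) :
    (mulPerm F k x : G) = k * x := by
  rw [mulPerm, Equiv.extendSubtype_apply_of_mem _ x h]
  rfl

lemma card_sdiff_filter_forall_mul_mem_le (F T : Finset G) :
    #(F \ {f ∈ F | ∀ t ∈ T, t * f ∈ F}) ≤ ∑ t ∈ T, #(F \ F.image (t⁻¹ * ·)) := by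
  refine (card_le_card fun f => ?_).trans card_biUnion_le
  simp only [mem_sdiff, mem_filter, mem_biUnion, image_mul_left, mem_preimage, inv_inv,
    not_and, not_forall, exists_prop]
  rintro ⟨hf, hbad⟩
  obtain ⟨t, ht, htf⟩ := hbad hf
  exact ⟨t, ht, hf, htf⟩

lemma exists_special_form (hG : IsAmenableFolner G) (K : Finset G) {ε : ℝ} (hε : 0 < ε) :
    ∃ F : Finset G, F.Nonempty ∧
      (∀ f ∈ F, f⁻¹ ∈ F) ∧
      (∀ k ∈ K, ((F \ F.image (k * ·)).card : ℝ) < ε * F.card) ∧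
      ∃ E : Finset G, E ⊆ F ∧ (1 - ε) * F.card ≤ (E.card : ℝ) ∧
        ∃ φ : G → Equiv.Perm {x : G // x ∈ F},
          (∀ k₁ ∈ K, ∀ k₂ ∈ K, ∀ f : {x : G // x ∈ F}, (f : G) ∈ E →
            ((φ k₁ (φ k₂ f) : G) = k₁ * k₂ * f ∧ (φ (k₁ * k₂) f : G) = k₁ * k₂ * f)) ∧
          (∀ k ∈ K, ∀ f : {x : G // x ∈ F}, (f : G) ∈ E → (φ k f : G) = k * f) := by
  set T := K ∪ K * K
  set δ := ε / (#T + 1) with hδ_def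
  have hδ : 0 < δ := by positivity
  have hTδ : #T * δ ≤ ε := by
    rw [hδ_def, ← mul_div_assoc, div_le_iff₀ (by positivity)]
    nlinarith
  have hδε : δ ≤ ε := div_le_self hε.le (by linarith [(#T).cast_nonneg (α := ℝ)])
  obtain ⟨F, hFne, hFsym, hF⟩ := exists_symmetric_folner hG (K ∪ T.image (·⁻¹)) hδ
  have hFpos : (0 : ℝ) < #F := by exact_mod_cast hFne.card_pos
  set E := {f ∈ F | ∀ t ∈ T, t * f ∈ F}
  have hE : (1 - ε) * #F ≤ (#E : ℝ) := by
    have hbad : (#(F \ E) : ℝ) ≤ #T * (δ * #F) :=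
      calc (#(F \ E) : ℝ) ≤ ∑ t ∈ T, (#(F \ F.image (t⁻¹ * ·)) : ℝ) := by
            exact_mod_cast card_sdiff_filter_forall_mul_mem_le F T
        _ ≤ ∑ _t ∈ T, δ * #F :=
            sum_le_sum fun t ht => (hF t⁻¹ (mem_union_right _ (mem_image_of_mem _ ht))).le
        _ = #T * (δ * #F) := by rw [sum_const, nsmul_eq_mul]
    have hsplit : (#(F \ E) : ℝ) + #E = #F := by
      exact_mod_cast card_sdiff_add_card_eq_card (filter_subset _ F)
    nlinarith [mul_le_mul_of_nonneg_right hTδ hFpos.le]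
  have hmulPerm : ∀ t ∈ T, ∀ f : F, (f : G) ∈ E → (mulPerm F t f : G) = t * f :=
    fun t ht _ hf => mulPerm_apply ((mem_filter.mp hf).2 t ht)
  refine ⟨F, hFne, hFsym, fun k hk => (hF k (mem_union_left _ hk)).trans_le (by gcongr), E,
    filter_subset _ _, hE, mulPerm F, fun k₁ hk₁ k₂ hk₂ f hf => ?_,
    fun k hk => hmulPerm k (mem_union_left _ hk)⟩
  have h₁₂ : k₁ * k₂ ∈ T := mem_union_right _ (mul_mem_mul hk₁ hk₂)
  have h₂ := hmulPerm k₂ (mem_union_left _ hk₂) f hf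
  have hstays : k₁ * (mulPerm F k₂ f : G) ∈ F := by
    rw [h₂, ← mul_assoc]
    exact (mem_filter.mp hf).2 _ h₁₂
  exact ⟨by rw [mulPerm_apply hstays, h₂, mul_assoc], hmulPerm _ h₁₂ f hf⟩

end SpecialForm

/-- Every amenable group is sofic; moreover, the sofic approximations can be taken
of a special form, coming from a symmetric Følner set `F`: there is `E ⊆ F` with
`|E| ≥ (1-ε)|F|` on which `φ` is governed by the group multiplication. -/
theorem amenable_isSofic_special_form {G : Type*} [Group G] [DecidableEq G]
    (hG : IsAmenableFolner G) :
    IsSofic G ∧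
    ∀ (K : Finset G) (ε : ℝ), 0 < ε →
      ∃ F : Finset G, F.Nonempty ∧
        (∀ f ∈ F, f⁻¹ ∈ F) ∧
        (∀ k ∈ K, ((F \ F.image (k * ·)).card : ℝ) < ε * F.card) ∧
        ∃ E : Finset G, E ⊆ F ∧ (1 - ε) * F.card ≤ (E.card : ℝ) ∧
          ∃ φ : G → Equiv.Perm {x : G // x ∈ F},
            (∀ k₁ ∈ K, ∀ k₂ ∈ K, ∀ f : {x : G // x ∈ F}, (f : G) ∈ E →
              ((φ k₁ (φ k₂ f) : G) = k₁ * k₂ * f ∧ (φ (k₁ * k₂) f : G) = k₁ * k₂ * f)) ∧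
            (∀ k ∈ K, ∀ f : {x : G // x ∈ F}, (f : G) ∈ E → (φ k f : G) = k * f) := by
  have hspecial := fun K ε (hε : 0 < ε) => exists_special_form hG K hε
  refine ⟨isSofic_of_exists_perm fun K ε hε => ?_, hspecial⟩
  obtain ⟨F, hFne, -, -, E, hEF, hE, φ, hφ₂, hφ₁⟩ := hspecial K ε hε
  have hFne' : Nonempty F := hFne.to_subtype
  have hEF' : (1 - ε) * Fintype.card F ≤ #(E.subtype (· ∈ F)) := by
    rwa [card_subtype, filter_true_of_mem hEF, Fintype.card_coe]
  refine ⟨F, inferInstance, hFne', φ,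
    fun k₁ hk₁ k₂ hk₂ => hamDist_le_of_eqOn hEF' fun f hf => ?_,
    fun k₁ hk₁ k₂ hk₂ hne => le_hamDist_of_ne hEF' fun f hf hφf => hne ?_⟩
  · obtain ⟨hcomp, hprod⟩ := hφ₂ k₁ hk₁ k₂ hk₂ f (mem_subtype.mp hf)
    exact Subtype.ext (hprod.trans hcomp.symm)
  · have := congrArg Subtype.val hφf
    rw [hφ₁ k₁ hk₁ f (mem_subtype.mp hf), hφ₁ k₂ hk₂ f (mem_subtype.mp hf)] at this
    exact mul_right_cancel this
end

section
/- In the definition of soficity, condition (s2) may be weakened: if there exists a constant α > 0 such that for every finite K ⊆ G and ε > 0 there is a map φ: G → Sym(F) with d_F(φ(k₁k₂), φ(k₁)φ(k₂)) ≤ ε for all k₁,k₂ ∈ K and d_F(φ(k₁),φ(k₂)) ≥ α for all distinct k₁,k₂ ∈ K, then G is sofic (i.e., the separation constant can be amplified to 1 − ε). -/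
lemma hamDist_nonneg {F : Type*} [Fintype F] (α β : Equiv.Perm F) : 0 ≤ hamDist α β :=
  div_nonneg (Nat.cast_nonneg _) (Nat.cast_nonneg _)

lemma card_ne_le {F : Type*} [Fintype F] (α β : Equiv.Perm F) :
    Nat.card {f : F // α f ≠ β f} ≤ Fintype.card F := by
  classical
  rw [Nat.card_eq_fintype_card]
  exact Fintype.card_subtype_le _

lemma hamDist_le_one {F : Type*} [Fintype F] [Nonempty F] (α β : Equiv.Perm F) :
    hamDist α β ≤ 1 := by
  rw [hamDist, div_le_one (by exact_mod_cast Fintype.card_pos)]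
  exact_mod_cast card_ne_le α β

lemma hamDist_pi {F : Type*} [Fintype F] [Nonempty F] (n : ℕ) (π ρ : Equiv.Perm F) :
    hamDist (Equiv.piCongrRight fun _ : Fin n => π) (Equiv.piCongrRight fun _ : Fin n => ρ)
      = 1 - (1 - hamDist π ρ) ^ n := by
  classical
  set N := Fintype.card F with hN
  have hNpos : 0 < N := Fintype.card_pos
  set m := Nat.card {x : F // π x ≠ ρ x} with hm
  have hmle : m ≤ N := card_ne_le π ρ
  -- count agreement set
  have heqcard : Fintype.card {x : F // π x = ρ x} = N - m := by
    have h1 := Fintype.card_subtype_compl (p := fun x : F => π x ≠ ρ x)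
    have h2 : Fintype.card {x : F // ¬ π x ≠ ρ x} = Fintype.card {x : F // π x = ρ x} :=
      Fintype.card_congr (Equiv.subtypeEquivRight fun x => not_not)
    rw [h2] at h1
    rw [h1, hm, Nat.card_eq_fintype_card, hN]
  have hagree : Fintype.card {f : Fin n → F // ∀ i, π (f i) = ρ (f i)} = (N - m) ^ n := by
    rw [← Nat.card_eq_fintype_card,
      Nat.card_congr (Equiv.subtypePiEquivPi (p := fun _ x => π x = ρ x))]
    rw [Nat.card_pi, Finset.prod_const, Finset.card_univ, Fintype.card_fin]
    rw [Nat.card_eq_fintype_card, heqcard]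
  have hdiff : Nat.card {f : Fin n → F //
      (Equiv.piCongrRight fun _ : Fin n => π) f ≠ (Equiv.piCongrRight fun _ : Fin n => ρ) f}
      = N ^ n - (N - m) ^ n := by
    have hiff : ∀ f : Fin n → F,
        ((Equiv.piCongrRight fun _ : Fin n => π) f ≠ (Equiv.piCongrRight fun _ : Fin n => ρ) f)
          ↔ ¬ ∀ i, π (f i) = ρ (f i) := by
      intro f
      simp [Equiv.piCongrRight, funext_iff]
    rw [Nat.card_congr (Equiv.subtypeEquivRight hiff)]
    rw [Nat.card_eq_fintype_card, Fintype.card_subtype_compl, Fintype.card_fun, Fintype.card_fin,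
      hagree]
  rw [hamDist, hamDist, hdiff, Fintype.card_fun, Fintype.card_fin]
  have hle : (N - m) ^ n ≤ N ^ n := Nat.pow_le_pow_left (Nat.sub_le _ _) n
  rw [Nat.cast_sub hle, Nat.cast_pow, Nat.cast_pow, Nat.cast_sub hmle]
  have hNne : (N : ℝ) ≠ 0 := by positivity
  rw [sub_div, div_self (by positivity), ← div_pow, sub_div, div_self hNne]


theorem sofic_of_weak_separation' {G : Type*} [Group G]
    (h : ∃ α : ℝ, 0 < α ∧ ∀ (K : Finset G) (ε : ℝ), 0 < ε →
      ∃ (F : Type) (_ : Fintype F) (_ : Nonempty F) (φ : G → Equiv.Perm F),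
        (∀ k₁ ∈ K, ∀ k₂ ∈ K, hamDist (φ (k₁ * k₂)) (φ k₁ * φ k₂) ≤ ε) ∧
        (∀ k₁ ∈ K, ∀ k₂ ∈ K, k₁ ≠ k₂ → α ≤ hamDist (φ k₁) (φ k₂))) :
    ∀ (K : Finset G) (ε : ℝ), 0 < ε →
    ∃ (F : Type) (_ : Fintype F) (_ : Nonempty F) (φ : G → Equiv.Perm F),
      (∀ k₁ ∈ K, ∀ k₂ ∈ K, hamDist (φ (k₁ * k₂)) (φ k₁ * φ k₂) ≤ ε) ∧
      (∀ k₁ ∈ K, ∀ k₂ ∈ K, k₁ ≠ k₂ → 1 - ε ≤ hamDist (φ k₁) (φ k₂)) := by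
  obtain ⟨α, hα, hw⟩ := h
  intro K ε hε
  set α' := min α (1/2) with hα'def
  have hα' : 0 < α' := lt_min hα (by norm_num)
  have hα'le : α' ≤ 1/2 := min_le_right _ _
  have hlt1 : (1 - α') < 1 := by linarith
  have hge0 : (0:ℝ) ≤ 1 - α' := by linarith
  obtain ⟨n₀, hn₀⟩ := exists_pow_lt_of_lt_one hε hlt1
  set n := max n₀ 1 with hndef
  have hn1 : 1 ≤ n := le_max_right _ _
  have hnpow : (1 - α') ^ n ≤ ε :=
    le_of_lt (lt_of_le_of_lt (pow_le_pow_of_le_one hge0 (le_of_lt hlt1) (le_max_left _ _)) hn₀)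
  have hnpos : (0:ℝ) < n := by exact_mod_cast hn1
  obtain ⟨F, iF, neF, φ, hmul, hsep⟩ := hw K (ε / n) (div_pos hε hnpos)
  refine ⟨Fin n → F, inferInstance, inferInstance,
    fun g => Equiv.piCongrRight fun _ : Fin n => φ g, ?_, ?_⟩
  · intro k₁ hk₁ k₂ hk₂
    have hΦ : (Equiv.piCongrRight fun _ : Fin n => φ k₁) * (Equiv.piCongrRight fun _ => φ k₂)
        = Equiv.piCongrRight fun _ : Fin n => φ k₁ * φ k₂ := by
      ext f i; rfl
    rw [hΦ, hamDist_pi]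
    set d := hamDist (φ (k₁ * k₂)) (φ k₁ * φ k₂) with hddef
    have hd0 : 0 ≤ d := hamDist_nonneg _ _
    have hd1 : d ≤ 1 := hamDist_le_one _ _
    have hdε : d ≤ ε / n := hmul k₁ hk₁ k₂ hk₂
    have hb := one_add_mul_le_pow (a := -d) (by linarith) n
    have h1 : 1 - (1 - d) ^ n ≤ n * d := by
      have : (1 + -d) ^ n = (1 - d) ^ n := by ring_nf
      nlinarith [hb]
    have h2 : (n:ℝ) * d ≤ n * (ε / n) := by
      exact mul_le_mul_of_nonneg_left hdε (le_of_lt hnpos)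
    rw [mul_div_cancel₀ _ (ne_of_gt hnpos)] at h2
    linarith
  · intro k₁ hk₁ k₂ hk₂ hne
    rw [hamDist_pi]
    set d := hamDist (φ k₁) (φ k₂) with hddef
    have hd1 : d ≤ 1 := hamDist_le_one _ _
    have hdα : α' ≤ d := le_trans (min_le_left _ _) (hsep k₁ hk₁ k₂ hk₂ hne)
    have : (1 - d) ^ n ≤ (1 - α') ^ n := pow_le_pow_left₀ (by linarith) (by linarith) n
    linarith


/-- In the definition of soficity the separation constant `1 - ε` may be replaced
by any uniform constant `α > 0`. -/
theorem sofic_of_weak_separation {G : Type*} [Group G]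
    (h : ∃ α : ℝ, 0 < α ∧ ∀ (K : Finset G) (ε : ℝ), 0 < ε →
      ∃ (F : Type) (_ : Fintype F) (_ : Nonempty F) (φ : G → Equiv.Perm F),
        (∀ k₁ ∈ K, ∀ k₂ ∈ K, hamDist (φ (k₁ * k₂)) (φ k₁ * φ k₂) ≤ ε) ∧
        (∀ k₁ ∈ K, ∀ k₂ ∈ K, k₁ ≠ k₂ → α ≤ hamDist (φ k₁) (φ k₂))) :
    IsSofic G := by
  exact sofic_of_weak_separation' h
end
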